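/- Let C ⊆ F_q^n be a linear code of length n = m(r+1) partitioned into m disjoint repair groups of size r+1 such that within each group every coordinate is a function of the other r coordinates (C has locality r), with dimension k and minimum distance d. Then d ≤ n - k - ⌈k/r⌉ + 2. -/
import Mathlib

open Finset Module

section Aux

variable {F : Type*} [Field F] {n : ℕ} [DecidableEq F]

/-- Projection onto a set of coordinates (zeroing the others). -/
def projL (F : Type*) [Field F] {n : ℕ} (S : Finset (Fin n)) :
    (Fin n → F) →ₗ[F] (Fin n → F) where
  toFun x := fun i => if i ∈ S then x i else 0
  map_add' x y := by funext i; by_cases h : i ∈ S <;> simp [h]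
  map_smul' c x := by funext i; by_cases h : i ∈ S <;> simp [h]

lemma projL_apply (S : Finset (Fin n)) (x : Fin n → F) (i : Fin n) :
    projL F S x i = if i ∈ S then x i else 0 := rfl

lemma projL_proj (S T : Finset (Fin n)) (x : Fin n → F) :
    projL F S (projL F T x) = projL F (S ∩ T) x := by
  funext i
  by_cases hS : i ∈ S <;> by_cases hT : i ∈ T <;>
    simp [projL_apply, hS, hT]

lemma projL_univ (x : Fin n → F) : projL F (univ : Finset (Fin n)) x = x := by
  funext i; simp [projL_apply]

lemma projL_union (S T : Finset (Fin n)) (h : Disjoint S T) (x : Fin n → F) :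
    projL F (S ∪ T) x = projL F S x + projL F T x := by
  funext i
  by_cases hS : i ∈ S
  · have hT : i ∉ T := fun hT => (Finset.disjoint_left.mp h hS) hT
    simp [projL_apply, hS, hT]
  · by_cases hT : i ∈ T <;> simp [projL_apply, hS, hT]

lemma projL_sum (S : Finset (Fin n)) (x : Fin n → F) :
    projL F S x = ∑ j ∈ S, x j • (Pi.single j (1 : F) : Fin n → F) := by
  funext i
  rw [Finset.sum_apply]
  simp only [projL_apply, Pi.smul_apply, Pi.single_apply, smul_eq_mul, mul_ite, mul_one,
    mul_zero, Finset.sum_ite_eq]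

variable (C : Submodule F (Fin n → F))

/-- The rank of the code projected to a coordinate set. -/
noncomputable def rkOn (S : Finset (Fin n)) : ℕ :=
  finrank F (C.map (projL F S))

lemma rkOn_univ : rkOn C (univ : Finset (Fin n)) = finrank F C := by
  have h : C.map (projL F (univ : Finset (Fin n))) = C := by
    have : projL F (univ : Finset (Fin n)) = (LinearMap.id : (Fin n → F) →ₗ[F] _) := by
      apply LinearMap.ext; exact projL_univ
    rw [this, Submodule.map_id]
  unfold rkOn
  rw [h]

lemma rkOn_mono {S T : Finset (Fin n)} (h : S ⊆ T) : rkOn C S ≤ rkOn C T := by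
  unfold rkOn
  have hmap : C.map (projL F S) = (C.map (projL F T)).map (projL F S) := by
    rw [← Submodule.map_comp]
    congr 1
    apply LinearMap.ext
    intro x
    simp only [LinearMap.comp_apply]
    rw [projL_proj, Finset.inter_eq_left.mpr h]
  rw [hmap]
  exact Submodule.finrank_map_le _ _

lemma rkOn_le_card (S : Finset (Fin n)) : rkOn C S ≤ S.card := by
  unfold rkOn
  have hle : C.map (projL F S) ≤
      Submodule.span F ((S.image fun j => (Pi.single j (1 : F) : Fin n → F)) : Set (Fin n → F)) := by
    rintro x ⟨c, _, rfl⟩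
    rw [projL_sum]
    apply Submodule.sum_mem
    intro j hj
    exact Submodule.smul_mem _ _ (Submodule.subset_span (by
      simp only [Finset.coe_image, Set.mem_image, Finset.mem_coe]
      exact ⟨j, hj, rfl⟩))
  calc finrank F (C.map (projL F S)) ≤
      finrank F (Submodule.span F ((S.image fun j => (Pi.single j (1 : F) : Fin n → F)) : Set (Fin n → F))) :=
        Submodule.finrank_mono hle
    _ ≤ (S.image fun j => (Pi.single j (1 : F) : Fin n → F)).card := finrank_span_finset_le_card _
    _ ≤ S.card := Finset.card_image_le

lemma rkOn_union_le (S T : Finset (Fin n)) (h : Disjoint S T) :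
    rkOn C (S ∪ T) ≤ rkOn C S + rkOn C T := by
  unfold rkOn
  have hle : C.map (projL F (S ∪ T)) ≤ C.map (projL F S) ⊔ C.map (projL F T) := by
    rintro x ⟨c, hc, rfl⟩
    rw [projL_union S T h]
    exact Submodule.add_mem_sup (Submodule.mem_map_of_mem hc) (Submodule.mem_map_of_mem hc)
  calc finrank F (C.map (projL F (S ∪ T))) ≤
      finrank F (C.map (projL F S) ⊔ C.map (projL F T) : Submodule F (Fin n → F)) :=
        Submodule.finrank_mono hle
    _ ≤ finrank F (C.map (projL F S)) + finrank F (C.map (projL F T)) := by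
        have := Submodule.finrank_sup_add_finrank_inf_eq (C.map (projL F S)) (C.map (projL F T))
        omega

lemma rkOn_insert_le (S : Finset (Fin n)) (x : Fin n) :
    rkOn C (insert x S) ≤ rkOn C S + 1 := by
  by_cases hx : x ∈ S
  · rw [Finset.insert_eq_self.mpr hx]; omega
  · have : insert x S = {x} ∪ S := Finset.insert_eq x S
    rw [this]
    have hd : Disjoint ({x} : Finset (Fin n)) S := by simpa using hx
    calc rkOn C ({x} ∪ S) ≤ rkOn C {x} + rkOn C S := rkOn_union_le C _ _ hd
      _ ≤ 1 + rkOn C S := by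
          have := rkOn_le_card C ({x} : Finset (Fin n))
          simp only [Finset.card_singleton] at this
          omega
      _ = rkOn C S + 1 := by omega

/-- A nonzero codeword vanishing on `T` exists when the projected rank is deficient. -/
lemma exists_vanishing (T : Finset (Fin n)) (hlt : rkOn C T < finrank F C) :
    ∃ c ∈ C, c ≠ 0 ∧ projL F T c = 0 := by
  by_contra hcon
  push_neg at hcon
  have hker : LinearMap.ker ((projL F T).domRestrict C) = ⊥ := by
    rw [LinearMap.ker_eq_bot']
    rintro ⟨c, hc⟩ hce
    simp only [LinearMap.domRestrict_apply] at hce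
    by_contra hne
    have hc0 : c ≠ 0 := fun h0 => hne (Subtype.ext h0)
    exact (hcon c hc hc0) hce
  have h1 := LinearMap.finrank_range_add_finrank_ker ((projL F T).domRestrict C)
  rw [hker, finrank_bot, LinearMap.range_domRestrict] at h1
  unfold rkOn at hlt
  omega

lemma rkOn_group_le {r : ℕ} (g : Finset (Fin n)) (hg : g.card = r + 1)
    (hloc : ∀ i ∈ g, ∀ c ∈ C, ∀ c' ∈ C, (∀ j ∈ g, j ≠ i → c j = c' j) → c i = c' i) :
    rkOn C g ≤ r := by
  obtain ⟨i, hi⟩ : ∃ i, i ∈ g := Finset.card_pos.mp (by omega)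
  have hmem : ∀ x ∈ C.map (projL F g), projL F (g.erase i) x ∈ C.map (projL F (g.erase i)) := by
    rintro x ⟨c, hc, rfl⟩
    rw [projL_proj, Finset.inter_eq_left.mpr (Finset.erase_subset i g)]
    exact Submodule.mem_map_of_mem hc
  have hinj : Function.Injective ((projL F (g.erase i)).restrict hmem) := by
    rintro ⟨x, hx⟩ ⟨y, hy⟩ hxy
    obtain ⟨c, hc, rfl⟩ := Submodule.mem_map.mp hx
    obtain ⟨c', hc', rfl⟩ := Submodule.mem_map.mp hy
    have hxy' : projL F (g.erase i) (projL F g c) = projL F (g.erase i) (projL F g c') :=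
      congrArg Subtype.val hxy
    rw [projL_proj, projL_proj, Finset.inter_eq_left.mpr (Finset.erase_subset i g)] at hxy'
    have hagree : ∀ j ∈ g, j ≠ i → c j = c' j := by
      intro j hj hji
      have hje : j ∈ g.erase i := Finset.mem_erase.mpr ⟨hji, hj⟩
      have := congrFun hxy' j
      simpa [projL_apply, hje] using this
    have hci : c i = c' i := hloc i hi c hc c' hc' hagree
    apply Subtype.ext
    funext j
    by_cases hj : j ∈ g
    · by_cases hji : j = i
      · subst hji; simpa [projL_apply, hj] using hci
      · simpa [projL_apply, hj] using hagree j hj hji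
    · simp [projL_apply, hj]
  calc rkOn C g ≤ finrank F (C.map (projL F (g.erase i))) :=
        LinearMap.finrank_le_finrank_of_injective hinj
    _ ≤ (g.erase i).card := rkOn_le_card C _
    _ ≤ r := by rw [Finset.card_erase_of_mem hi, hg]; omega

lemma rkOn_biUnion_le {m r : ℕ} (groups : Fin m → Finset (Fin n))
    (hdisj : ∀ g g' : Fin m, g ≠ g' → Disjoint (groups g) (groups g'))
    (hgr : ∀ g, rkOn C (groups g) ≤ r) (G : Finset (Fin m)) :
    rkOn C (G.biUnion groups) ≤ G.card * r := by
  induction G using Finset.induction_on with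
  | empty => simpa using rkOn_le_card C (∅ : Finset (Fin n))
  | @insert g G hg IH =>
    rw [Finset.biUnion_insert]
    have hdG : Disjoint (groups g) (G.biUnion groups) := by
      rw [Finset.disjoint_biUnion_right]
      intro g' hg'
      exact hdisj g g' (fun h => hg (h ▸ hg'))
    calc rkOn C (groups g ∪ G.biUnion groups) ≤ rkOn C (groups g) + rkOn C (G.biUnion groups) :=
          rkOn_union_le C _ _ hdG
      _ ≤ r + G.card * r := add_le_add (hgr g) IH
      _ = (insert g G).card * r := by rw [Finset.card_insert_of_notMem hg]; ring

lemma extend_exists {K : ℕ} (hku : rkOn C (univ : Finset (Fin n)) = K) :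
    ∀ (j : ℕ) (S : Finset (Fin n)), rkOn C S + j < K →
      ∃ T, S ⊆ T ∧ T.card = S.card + j ∧ rkOn C T ≤ rkOn C S + j := by
  intro j
  induction j with
  | zero => intro S _; exact ⟨S, subset_rfl, by omega, by omega⟩
  | succ j IH =>
    intro S h
    obtain ⟨T, hST, hcard, hrk⟩ := IH S (by omega)
    have hTne : T ≠ univ := by
      intro he; rw [he, hku] at hrk; omega
    obtain ⟨x, hx⟩ : ∃ x, x ∉ T := by
      by_contra hcon; push_neg at hcon; exact hTne (Finset.eq_univ_iff_forall.mpr hcon)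
    refine ⟨insert x T, hST.trans (Finset.subset_insert x T), ?_, ?_⟩
    · rw [Finset.card_insert_of_notMem hx]; omega
    · have := rkOn_insert_le C T x; omega

end Aux


/-- **Singleton-type bound for locally repairable codes.** Let `C ⊆ F_q^n` be a linear
code of length `n = m(r+1)`, partitioned into `m` disjoint repair groups of size `r+1`
such that within each group every coordinate is determined by the other `r` coordinates
(so `C` has locality `r`), with dimension `k` and minimum distance `d` (the least
Hamming weight of a nonzero codeword). Then `d ≤ n - k - ⌈k/r⌉ + 2`. -/
theorem singleton_bound_lrc {F : Type*} [Field F] [Fintype F] [DecidableEq F]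
    {n m r k d : ℕ} (hr : 0 < r) (hn : n = m * (r + 1))
    (C : Submodule F (Fin n → F))
    (groups : Fin m → Finset (Fin n))
    (hdisj : ∀ g g' : Fin m, g ≠ g' → Disjoint (groups g) (groups g'))
    (hcard : ∀ g : Fin m, (groups g).card = r + 1)
    (hcover : ∀ i : Fin n, ∃ g : Fin m, i ∈ groups g)
    (hloc : ∀ (g : Fin m), ∀ i ∈ groups g, ∀ c ∈ C, ∀ c' ∈ C,
      (∀ j ∈ groups g, j ≠ i → c j = c' j) → c i = c' i)
    (hk : k = Module.finrank F C)
    (hd : IsLeast {w : ℕ | ∃ c ∈ C, c ≠ 0 ∧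
      w = (Finset.univ.filter fun j => c j ≠ 0).card} d) :
    (d : ℤ) ≤ (n : ℤ) - k - ((k + r - 1) / r : ℕ) + 2 := by
  classical
  -- `k ≥ 1` since there is a nonzero codeword
  obtain ⟨c₀, hc₀C, hc₀ne, _⟩ := hd.1
  have hk1 : 0 < k := by
    rw [hk]
    exact Module.finrank_pos_iff_exists_ne_zero.mpr
      ⟨⟨c₀, hc₀C⟩, fun h => hc₀ne (congrArg Subtype.val h)⟩
  have huniv : rkOn C (univ : Finset (Fin n)) = k := by rw [rkOn_univ, hk]
  -- the whole coordinate set is the union of the groups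
  have hcovU : (univ : Finset (Fin m)).biUnion groups = (univ : Finset (Fin n)) := by
    apply Finset.eq_univ_iff_forall.mpr
    intro i
    obtain ⟨g, hg⟩ := hcover i
    exact Finset.mem_biUnion.mpr ⟨g, Finset.mem_univ g, hg⟩
  have hgr : ∀ g, rkOn C (groups g) ≤ r := fun g =>
    rkOn_group_le C (groups g) (hcard g) (hloc g)
  have hkmr : k ≤ m * r := by
    have := rkOn_biUnion_le C groups hdisj hgr (univ : Finset (Fin m))
    rw [hcovU, huniv, Finset.card_univ, Fintype.card_fin] at this
    exact this
  set t := (k - 1) / r with ht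
  have htr : t * r ≤ k - 1 := Nat.div_mul_le_self (k - 1) r
  have htm : t < m := by
    have h1 : t * r < m * r := by omega
    exact Nat.lt_of_mul_lt_mul_right h1
  -- take `t` full groups
  set G : Finset (Fin m) := (Finset.range t).attachFin
    (fun x hx => (Finset.mem_range.mp hx).trans htm) with hG
  have hGcard : G.card = t := by rw [hG, Finset.card_attachFin, Finset.card_range]
  set B : Finset (Fin n) := G.biUnion groups with hB
  have hBcard : B.card = t * (r + 1) := by
    rw [hB, Finset.card_biUnion (fun g hg g' hg' hne => hdisj g g' hne)]
    rw [Finset.sum_congr rfl (fun g _ => hcard g), Finset.sum_const, hGcard, smul_eq_mul]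
  have haB : rkOn C B ≤ t * r := by
    have := rkOn_biUnion_le C groups hdisj hgr G
    rwa [hGcard] at this
  set a := rkOn C B with haz
  have hak : a ≤ k - 1 := le_trans haB htr
  -- extend to a large set of rank at most `k - 1`
  obtain ⟨T, hBT, hTcard, hTrk⟩ := extend_exists C huniv (k - 1 - a) B (by omega)
  -- get a nonzero codeword vanishing on `T`
  obtain ⟨c, hcC, hcne, hcv⟩ := exists_vanishing C T (by rw [← hk]; omega)
  have hdw : d ≤ (Finset.univ.filter fun j => c j ≠ 0).card :=
    hd.2 ⟨c, hcC, hcne, rfl⟩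
  have hwT : (Finset.univ.filter fun j => c j ≠ 0).card ≤ n - T.card := by
    have hsub : (Finset.univ.filter fun j => c j ≠ 0) ⊆ Tᶜ := by
      intro j hj
      rw [Finset.mem_compl]
      intro hjT
      have := congrFun hcv j
      simp only [projL_apply, hjT, if_true, Pi.zero_apply] at this
      exact (Finset.mem_filter.mp hj).2 this
    calc (Finset.univ.filter fun j => c j ≠ 0).card ≤ Tᶜ.card := Finset.card_le_card hsub
      _ = n - T.card := by rw [Finset.card_compl, Fintype.card_fin]
  have hTn : T.card ≤ n := by
    have := Finset.card_le_card (Finset.subset_univ T)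
    rwa [Finset.card_univ, Fintype.card_fin] at this
  have hceil : (k + r - 1) / r = t + 1 := by
    have h1 : k + r - 1 = (k - 1) + r := by omega
    rw [h1, Nat.add_div_right _ hr, ht]
  have hTc : T.card = t * r + t + (k - 1 - a) := by
    rw [hTcard, hBcard]; ring_nf
  rw [hceil]
  have hmul : t * (r + 1) = t * r + t := by ring
  generalize hvr : t * r = v at hTc htr
  omega
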